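/- Let κ be a loss-based return risk measure whose associated risk measure ρ_κ(Y) = log(κ(e^{−Y})) is positively homogeneous (ρ_κ(tY) = tρ_κ(Y) for all Y ∈ 𝒳 and t > 0). Then κ is SSD-consistent on 𝓔 in the loss-based sense (for all L, L′ ∈ 𝓔, −L ≤_SSD −L′ implies κ(L) ≥ κ(L′)) if and only if κ(L) = M(L) := inf{x ∈ ℝ : L ≤ x ℙ-a.s.} = ess sup L for all L ∈ 𝓔. -/

import Mathlib

open MeasureTheory Filter Set

noncomputable section

namespace Paper

variable {Ω : Type*} [MeasurableSpace Ω]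

/-- The probability measure `P` is atomless. -/
def Atomless (P : Measure Ω) : Prop :=
  ∀ s : Set Ω, MeasurableSet s → 0 < P s →
    ∃ t : Set Ω, MeasurableSet t ∧ t ⊆ s ∧ 0 < P t ∧ P t < P s

/-- `𝒳`: the essentially bounded random variables. -/
def MemX (P : Measure Ω) (X : Ω → ℝ) : Prop :=
  Measurable X ∧ ∃ C : ℝ, ∀ᵐ ω ∂P, |X ω| ≤ C

/-- `𝒰(I)`: twice differentiable functions with everywhere positive first
derivative on `I`. -/
def IsUtility (I : Set ℝ) (u : ℝ → ℝ) : Prop :=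
  (∀ x ∈ I, DifferentiableAt ℝ u x) ∧
  (∀ x ∈ I, DifferentiableAt ℝ (deriv u) x) ∧
  (∀ x ∈ I, 0 < deriv u x)

/-- Arrow–Pratt coefficient of absolute risk aversion. -/
def RA (u : ℝ → ℝ) (x : ℝ) : ℝ := -deriv (deriv u) x / deriv u x

/-- `𝓛¹_v`: `I`-valued random variables `X` with `v(X)` integrable. -/
def MemL1 (P : Measure Ω) (I : Set ℝ) (v : ℝ → ℝ) (X : Ω → ℝ) : Prop :=
  Measurable X ∧ (∀ᵐ ω ∂P, X ω ∈ I) ∧ Integrable (fun ω => v (X ω)) P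

/-- The `v`-SD order: `X ≤_{v-SD} Y`. -/
def vSD (P : Measure Ω) (I : Set ℝ) (v : ℝ → ℝ) (X Y : Ω → ℝ) : Prop :=
  ∀ u : ℝ → ℝ, IsUtility I u → (∀ x ∈ I, RA v x ≤ RA u x) →
    Integrable (fun ω => u (X ω)) P → Integrable (fun ω => u (Y ω)) P →
    ∫ ω, u (X ω) ∂P ≤ ∫ ω, u (Y ω) ∂P

/-- Second-order stochastic dominance. -/
def SSD (P : Measure Ω) (X Y : Ω → ℝ) : Prop :=
  ∀ u : ℝ → ℝ, IsUtility Set.univ u → ConcaveOn ℝ Set.univ u →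
    Integrable (fun ω => u (X ω)) P → Integrable (fun ω => u (Y ω)) P →
    ∫ ω, u (X ω) ∂P ≤ ∫ ω, u (Y ω) ∂P

/-- Monetary risk measure: antitone and cash-additive on `𝒳`. -/
def IsRiskMeasure (P : Measure Ω) (ρ : (Ω → ℝ) → ℝ) : Prop :=
  (∀ X Y : Ω → ℝ, MemX P X → MemX P Y → (∀ᵐ ω ∂P, X ω ≤ Y ω) → ρ Y ≤ ρ X) ∧
  (∀ X : Ω → ℝ, MemX P X → ∀ c : ℝ, ρ (fun ω => X ω + c) = ρ X - c)

/-- Worst-case risk measure `ρ^w(X) = ess sup (-X)`. -/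
def rhoW (P : Measure Ω) (X : Ω → ℝ) : ℝ :=
  sInf {m : ℝ | ∀ᵐ ω ∂P, -X ω ≤ m}

/-- `v`-SD-consistency of `φ` on the domain `D`. -/
def VSDConsistent (P : Measure Ω) (I : Set ℝ) (v : ℝ → ℝ)
    (D : Set (Ω → ℝ)) (φ : (Ω → ℝ) → ℝ) : Prop :=
  ∀ X Y : Ω → ℝ, X ∈ D → Y ∈ D → MemL1 P I v X → MemL1 P I v Y →
    vSD P I v X Y → φ Y ≤ φ X

/-- `𝒞`: the a.s. strictly positive bounded random variables. -/
def MemC (P : Measure Ω) (X : Ω → ℝ) : Prop :=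
  MemX P X ∧ ∀ᵐ ω ∂P, 0 < X ω

/-- `𝓔 = {e^Y : Y ∈ 𝒳}` (up to a.s. equality). -/
def MemE (P : Measure Ω) (X : Ω → ℝ) : Prop :=
  ∃ Y : Ω → ℝ, MemX P Y ∧ ∀ᵐ ω ∂P, X ω = Real.exp (Y ω)

/-- Return risk measure. -/
def IsRRM (P : Measure Ω) (η : (Ω → ℝ) → ℝ) : Prop :=
  (∀ X : Ω → ℝ, MemC P X → 0 < η X) ∧
  (∀ X Y : Ω → ℝ, MemC P X → MemC P Y → (∀ᵐ ω ∂P, X ω ≤ Y ω) → η Y ≤ η X) ∧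
  (∀ X : Ω → ℝ, MemC P X → ∀ t : ℝ, 0 < t → η (fun ω => t * X ω) = t⁻¹ * η X)

/-- Loss-based return risk measure. -/
def IsLossRRM (P : Measure Ω) (κ : (Ω → ℝ) → ℝ) : Prop :=
  (∀ L : Ω → ℝ, MemC P L → 0 < κ L) ∧
  (∀ L L' : Ω → ℝ, MemC P L → MemC P L' → (∀ᵐ ω ∂P, L' ω ≤ L ω) → κ L' ≤ κ L) ∧
  (∀ L : Ω → ℝ, MemC P L → ∀ t : ℝ, 0 < t → κ (fun ω => t * L ω) = t * κ L)

/-- Base risk measure `ρ_{Z,v}`. -/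
def baseRM (P : Measure Ω) (v : ℝ → ℝ) (Z X : Ω → ℝ) : ℝ :=
  sInf {m : ℝ | vSD P Set.univ v Z (fun ω => X ω + m)}

/-- Lower quantile function. -/
def qf (P : Measure Ω) (X : Ω → ℝ) (r : ℝ) : ℝ :=
  sInf {x : ℝ | r ≤ (P {ω | X ω ≤ x}).toReal}

/-- Expected Shortfall at level `p`. -/
def ES (P : Measure Ω) (p : ℝ) (X : Ω → ℝ) : ℝ :=
  if p < 1 then -(1 / (1 - p)) * ∫ r in (0:ℝ)..(1 - p), qf P X r
  else rhoW P X

/-!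
Both directions rest on one Chernoff-type fact: if `E[e^{tX}] ≤ e^{tb}` for every `t > 0`, then
`X ≤ b` a.s. For `⇐`, the concave utilities `x ↦ -e^{-tx}` turn `-L ≤_SSD -L'` into
`E[e^{tL'}] ≤ E[e^{tL}] ≤ e^{t·ess sup L}`. For `⇒`, homogeneity of `ρ_κ` forces `κ(c) = c` on
constants, so Jensen (`-e^Z ≤_SSD -E[e^Z]`) gives `E[e^{tY}] ≤ κ(e^{tY}) = κ(e^Y)^t`, whence
`e^Y ≤ κ(e^Y)` a.s.; the reverse inequality is monotonicity against the constant `ess sup e^Y`.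
-/

open Real

variable {P : Measure Ω}

lemma sInf_ae_le_eq_essSup (P : Measure Ω) (L : Ω → ℝ) :
    sInf {x : ℝ | ∀ᵐ ω ∂P, L ω ≤ x} = essSup L P := rfl

lemma integrable_comp_of_ae_abs_le [IsFiniteMeasure P] {f : Ω → ℝ}
    (hf : AEStronglyMeasurable f P) {C : ℝ} (hC : ∀ᵐ ω ∂P, |f ω| ≤ C) {g : ℝ → ℝ}
    (hg : Continuous g) : Integrable (fun ω => g (f ω)) P := by
  obtain ⟨D, hD⟩ := (isCompact_Icc (a := -C) (b := C)).exists_bound_of_continuousOn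
    hg.continuousOn
  refine .of_bound (hg.comp_aestronglyMeasurable hf) D ?_
  filter_upwards [hC] with ω hω
  exact hD _ (abs_le.mp hω)

lemma measureReal_le_exp_neg_mul_of_integral_exp_mul_le [IsFiniteMeasure P] {f : Ω → ℝ}
    {b t : ℝ} (ht : 0 < t) (hint : Integrable (fun ω => exp (t * f ω)) P)
    (h : ∫ ω, exp (t * f ω) ∂P ≤ exp (t * b)) (ε : ℝ) :
    P.real {ω | b + ε ≤ f ω} ≤ exp (-(ε * t)) := by
  have hmarkov := mul_meas_ge_le_integral_of_nonneg
    (ae_of_all _ fun ω => (exp_pos (t * f ω)).le) hint (exp (t * (b + ε)))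
  have hset : {ω | exp (t * (b + ε)) ≤ exp (t * f ω)} = {ω | b + ε ≤ f ω} := by
    ext ω
    exact exp_le_exp.trans (mul_le_mul_iff_right₀ ht)
  rw [hset] at hmarkov
  have hp := (le_div_iff₀' (exp_pos _)).2 (hmarkov.trans h)
  rwa [← exp_sub, show t * b - t * (b + ε) = -(ε * t) by ring] at hp

/-- Chernoff: `P(b + ε ≤ f) ≤ e^{-εt}` for every `t > 0`, and `t → ∞`. -/
lemma ae_le_of_integral_exp_mul_le [IsFiniteMeasure P] {f : Ω → ℝ} {b : ℝ}
    (hint : ∀ t, 0 < t → Integrable (fun ω => exp (t * f ω)) P)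
    (h : ∀ t, 0 < t → ∫ ω, exp (t * f ω) ∂P ≤ exp (t * b)) :
    ∀ᵐ ω ∂P, f ω ≤ b := by
  have hnull : ∀ ε, 0 < ε → P {ω | b + ε ≤ f ω} = 0 := by
    intro ε hε
    have hlim : Tendsto (fun t => exp (-(ε * t))) atTop (nhds 0) :=
      tendsto_exp_neg_atTop_nhds_zero.comp (tendsto_id.const_mul_atTop hε)
    have hle : ∀ᶠ t in atTop, P.real {ω | b + ε ≤ f ω} ≤ exp (-(ε * t)) :=
      (eventually_gt_atTop 0).mono fun t ht =>
        measureReal_le_exp_neg_mul_of_integral_exp_mul_le ht (hint t ht) (h t ht) ε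
    rw [← measureReal_eq_zero_iff]
    exact le_antisymm (ge_of_tendsto hlim hle) measureReal_nonneg
  have hae : ∀ n : ℕ, ∀ᵐ ω ∂P, f ω < b + 1 / (n + 1) := fun n => by
    filter_upwards [measure_eq_zero_iff_ae_notMem.1 (hnull _ Nat.one_div_pos_of_nat)]
      with ω hω
    simpa using hω
  filter_upwards [ae_all_iff.2 hae] with ω hω
  refine le_of_forall_pos_lt_add fun ε hε => ?_
  obtain ⟨n, hn⟩ := exists_nat_one_div_lt hε
  linarith [hω n]

lemma SSD.of_ae_eq {X X' : Ω → ℝ} (h : X =ᵐ[P] X') : SSD P X X' :=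
  fun u _ _ _ _ => (integral_congr_ae (h.fun_comp u)).le

lemma ssd_const_integral [IsProbabilityMeasure P] {X : Ω → ℝ} (hX : Integrable X P) :
    SSD P X (fun _ => ∫ ω, X ω ∂P) := by
  intro u hu hconc hiX _
  rw [integral_const, probReal_univ, one_smul]
  exact hconc.le_map_integral (fun x _ => (hu.1 x (mem_univ x)).continuousAt.continuousWithinAt)
    isClosed_univ (ae_of_all _ fun _ => mem_univ _) hX hiX

lemma hasDerivAt_neg_exp_neg_mul (t x : ℝ) :
    HasDerivAt (fun y => -exp (-t * y)) (t * exp (-t * x)) x := by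
  have hlin : HasDerivAt (fun y => -t * y) (-t) x := by
    simpa using (hasDerivAt_id x).const_mul (-t)
  have h : HasDerivAt (fun y => -exp (-t * y)) (-(exp (-t * x) * -t)) x := hlin.exp.neg
  convert h using 1
  ring

lemma deriv_neg_exp_neg_mul (t : ℝ) :
    deriv (fun y => -exp (-t * y)) = fun x => t * exp (-t * x) :=
  funext fun x => (hasDerivAt_neg_exp_neg_mul t x).deriv

lemma isUtility_neg_exp_neg_mul {t : ℝ} (ht : 0 < t) :
    IsUtility univ (fun y => -exp (-t * y)) := by
  refine ⟨fun x _ => (hasDerivAt_neg_exp_neg_mul t x).differentiableAt, fun x _ => ?_,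
    fun x _ => ?_⟩ <;> rw [deriv_neg_exp_neg_mul]
  · fun_prop
  · positivity

lemma concaveOn_neg_exp_neg_mul (t : ℝ) : ConcaveOn ℝ univ (fun y => -exp (-t * y)) := by
  have h : ConvexOn ℝ univ (fun y => exp (-t * y)) :=
    convexOn_exp.comp_linearMap (LinearMap.mulLeft ℝ (-t))
  exact h.neg

lemma SSD.integral_exp_neg_mul_le {X Y : Ω → ℝ} (h : SSD P X Y) {t : ℝ} (ht : 0 < t)
    (hX : Integrable (fun ω => exp (-t * X ω)) P)
    (hY : Integrable (fun ω => exp (-t * Y ω)) P) :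
    ∫ ω, exp (-t * Y ω) ∂P ≤ ∫ ω, exp (-t * X ω) ∂P := by
  have h := h _ (isUtility_neg_exp_neg_mul ht) (concaveOn_neg_exp_neg_mul t) hX.neg hY.neg
  rw [integral_neg, integral_neg] at h
  linarith

lemma memC_const {c : ℝ} (hc : 0 < c) : MemC P (fun _ => c) :=
  ⟨⟨measurable_const, |c|, ae_of_all _ fun _ => le_rfl⟩, ae_of_all _ fun _ => hc⟩

lemma memE_const {c : ℝ} (hc : 0 < c) : MemE P (fun _ => c) :=
  ⟨fun _ => log c, ⟨measurable_const, |log c|, ae_of_all _ fun _ => le_rfl⟩,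
    ae_of_all _ fun _ => (exp_log hc).symm⟩

namespace MemX

variable {Y : Ω → ℝ}

lemma const_mul (hY : MemX P Y) (c : ℝ) : MemX P (fun ω => c * Y ω) := by
  obtain ⟨hm, C, hC⟩ := hY
  refine ⟨hm.const_mul c, |c| * C, ?_⟩
  filter_upwards [hC] with ω hω
  rw [abs_mul]
  gcongr

lemma neg (hY : MemX P Y) : MemX P (fun ω => -Y ω) := by
  simpa using hY.const_mul (-1)

lemma integrable_comp [IsFiniteMeasure P] (hY : MemX P Y) {g : ℝ → ℝ} (hg : Continuous g) :
    Integrable (fun ω => g (Y ω)) P :=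
  let ⟨hm, _, hC⟩ := hY
  integrable_comp_of_ae_abs_le hm.aestronglyMeasurable hC hg

lemma memE_exp (hY : MemX P Y) : MemE P (fun ω => exp (Y ω)) :=
  ⟨Y, hY, ae_of_all _ fun _ => rfl⟩

lemma memC_exp (hY : MemX P Y) : MemC P (fun ω => exp (Y ω)) := by
  obtain ⟨hm, C, hC⟩ := hY
  refine ⟨⟨by fun_prop, exp C, ?_⟩, ae_of_all _ fun _ => exp_pos _⟩
  filter_upwards [hC] with ω hω
  rw [abs_of_pos (exp_pos _)]
  exact exp_le_exp.2 (le_of_abs_le hω)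

end MemX

namespace MemE

variable {L : Ω → ℝ}

lemma exists_ae_abs_le (hL : MemE P L) : ∃ C, ∀ᵐ ω ∂P, |L ω| ≤ C := by
  obtain ⟨Y, ⟨-, C, hC⟩, hLY⟩ := hL
  refine ⟨exp C, ?_⟩
  filter_upwards [hC, hLY] with ω hω hω'
  rw [hω', abs_of_pos (exp_pos _)]
  exact exp_le_exp.2 (le_of_abs_le hω)

lemma integrable_comp [IsFiniteMeasure P] (hL : MemE P L) {g : ℝ → ℝ} (hg : Continuous g) :
    Integrable (fun ω => g (L ω)) P := by
  obtain ⟨C, hC⟩ := hL.exists_ae_abs_le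
  obtain ⟨Y, ⟨hm, -⟩, hLY⟩ := hL
  exact integrable_comp_of_ae_abs_le
    ((measurable_exp.comp hm).aestronglyMeasurable.congr (EventuallyEq.symm hLY)) hC hg

lemma integrable_exp_mul [IsFiniteMeasure P] (hL : MemE P L) (t : ℝ) :
    Integrable (fun ω => exp (t * L ω)) P :=
  hL.integrable_comp (g := fun x => exp (t * x)) (by fun_prop)

lemma ae_pos (hL : MemE P L) : ∀ᵐ ω ∂P, 0 < L ω := by
  obtain ⟨Y, -, hLY⟩ := hL
  filter_upwards [hLY] with ω hω
  exact hω ▸ exp_pos _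

lemma isBoundedUnder_le (hL : MemE P L) : IsBoundedUnder (· ≤ ·) (ae P) L := by
  obtain ⟨C, hC⟩ := hL.exists_ae_abs_le
  exact isBoundedUnder_of_eventually_le (hC.mono fun _ hω => le_of_abs_le hω)

lemma isCoboundedUnder_le [NeZero P] (hL : MemE P L) : IsCoboundedUnder (· ≤ ·) (ae P) L :=
  isCoboundedUnder_le_of_eventually_le _ (hL.ae_pos.mono fun _ hω => hω.le)

lemma essSup_le_of_ssd [IsProbabilityMeasure P] {L' : Ω → ℝ} (hL : MemE P L) (hL' : MemE P L')
    (h : SSD P (fun ω => -L ω) (fun ω => -L' ω)) : essSup L' P ≤ essSup L P := by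
  refine essSup_le_of_ae_le _ (ae_le_of_integral_exp_mul_le
    (fun t _ => hL'.integrable_exp_mul t) fun t ht => ?_) hL'.isCoboundedUnder_le
  calc ∫ ω, exp (t * L' ω) ∂P ≤ ∫ ω, exp (t * L ω) ∂P := by
        simpa using h.integral_exp_neg_mul_le ht (by simpa using hL.integrable_exp_mul t)
          (by simpa using hL'.integrable_exp_mul t)
    _ ≤ ∫ _, exp (t * essSup L P) ∂P := by
        refine integral_mono_ae (hL.integrable_exp_mul t) (integrable_const _) ?_
        filter_upwards [ae_le_essSup hL.isBoundedUnder_le] with ω hω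
        gcongr
    _ = exp (t * essSup L P) := by simp

end MemE

def LossSSDConsistent (P : Measure Ω) (κ : (Ω → ℝ) → ℝ) : Prop :=
  ∀ L L' : Ω → ℝ, MemE P L → MemE P L' →
    SSD P (fun ω => -L ω) (fun ω => -L' ω) → κ L' ≤ κ L

/-- `ρ_κ(Y) = log (κ (e^{-Y}))` is positively homogeneous on `𝒳`. -/
def RhoPosHomogeneous (P : Measure Ω) (κ : (Ω → ℝ) → ℝ) : Prop :=
  ∀ Y : Ω → ℝ, MemX P Y → ∀ t : ℝ, 0 < t →
    log (κ fun ω => exp (-(t * Y ω))) = t * log (κ fun ω => exp (-(Y ω)))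

variable {κ : (Ω → ℝ) → ℝ}

namespace RhoPosHomogeneous

lemma apply_const (hph : RhoPosHomogeneous P κ) (hκ : IsLossRRM P κ) (c : ℝ) (hc : 0 < c) :
    κ (fun _ => c) = c := by
  have hlog : log (κ fun _ => 1) = 2 * log (κ fun _ => 1) := by
    simpa using hph (fun _ => 0) ⟨measurable_const, 0, ae_of_all _ fun _ => by simp⟩ 2 two_pos
  have hone : κ (fun _ => 1) = 1 :=
    eq_one_of_pos_of_log_eq_zero (hκ.1 _ (memC_const one_pos)) (by linarith)
  simpa [hone] using hκ.2.2 _ (memC_const one_pos) c hc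

lemma log_apply_exp_mul (hph : RhoPosHomogeneous P κ) {Y : Ω → ℝ} (hY : MemX P Y) {t : ℝ}
    (ht : 0 < t) : log (κ fun ω => exp (t * Y ω)) = t * log (κ fun ω => exp (Y ω)) := by
  simpa using hph _ hY.neg t ht

end RhoPosHomogeneous

lemma IsLossRRM.apply_le_essSup [IsProbabilityMeasure P] (hκ : IsLossRRM P κ)
    (hκc : ∀ c, 0 < c → κ (fun _ => c) = c) {L : Ω → ℝ} (hL : MemC P L) :
    κ L ≤ essSup L P := by
  obtain ⟨C, hC⟩ := hL.1.2
  have hle : ∀ᵐ ω ∂P, L ω ≤ essSup L P :=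
    ae_le_essSup (isBoundedUnder_of_eventually_le (hC.mono fun _ hω => le_of_abs_le hω))
  obtain ⟨ω, hω0, hω⟩ := (hL.2.and hle).exists
  have hM : 0 < essSup L P := hω0.trans_le hω
  calc κ L ≤ κ (fun _ => essSup L P) := hκ.2.1 _ _ (memC_const hM) hL hle
    _ = essSup L P := hκc _ hM

namespace LossSSDConsistent

lemma apply_congr (hcons : LossSSDConsistent P κ) {L L' : Ω → ℝ} (hL : MemE P L)
    (hL' : MemE P L') (h : L =ᵐ[P] L') : κ L = κ L' :=
  le_antisymm (hcons L' L hL' hL (.of_ae_eq (h.fun_comp Neg.neg).symm))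
    (hcons L L' hL hL' (.of_ae_eq (h.fun_comp Neg.neg)))

/-- Jensen: `-e^Z` is SSD-dominated by the constant `-E[e^Z]`. -/
lemma integral_exp_le [IsProbabilityMeasure P] (hcons : LossSSDConsistent P κ)
    (hκc : ∀ c, 0 < c → κ (fun _ => c) = c) {Z : Ω → ℝ} (hZ : MemX P Z) :
    ∫ ω, exp (Z ω) ∂P ≤ κ (fun ω => exp (Z ω)) := by
  have hint : Integrable (fun ω => exp (Z ω)) P := hZ.integrable_comp continuous_exp
  have hpos : 0 < ∫ ω, exp (Z ω) ∂P := integral_exp_pos hint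
  have hssd := ssd_const_integral (X := fun ω => -exp (Z ω)) hint.neg
  rw [integral_neg] at hssd
  simpa [hκc _ hpos] using hcons _ _ hZ.memE_exp (memE_const hpos) hssd

lemma essSup_exp_le [IsProbabilityMeasure P] (hcons : LossSSDConsistent P κ)
    (hκ : IsLossRRM P κ) (hph : RhoPosHomogeneous P κ) {Y : Ω → ℝ} (hY : MemX P Y) :
    essSup (fun ω => exp (Y ω)) P ≤ κ (fun ω => exp (Y ω)) := by
  have hκc := hph.apply_const hκ
  have hae : ∀ᵐ ω ∂P, Y ω ≤ log (κ fun ω => exp (Y ω)) := by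
    refine ae_le_of_integral_exp_mul_le
      (fun t _ => hY.integrable_comp (g := fun x => exp (t * x)) (by fun_prop)) fun t ht => ?_
    calc ∫ ω, exp (t * Y ω) ∂P ≤ κ (fun ω => exp (t * Y ω)) :=
          hcons.integral_exp_le hκc (hY.const_mul t)
      _ = exp (log (κ fun ω => exp (t * Y ω))) :=
          (exp_log (hκ.1 _ (hY.const_mul t).memC_exp)).symm
      _ = exp (t * log (κ fun ω => exp (Y ω))) := by rw [hph.log_apply_exp_mul hY ht]
  refine essSup_le_of_ae_le _ ?_ hY.memE_exp.isCoboundedUnder_le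
  filter_upwards [hae] with ω hω
  simpa [exp_log (hκ.1 _ hY.memC_exp)] using exp_le_exp.2 hω

end LossSSDConsistent

theorem statement15_general (P : Measure Ω) [IsProbabilityMeasure P]
    (κ : (Ω → ℝ) → ℝ) (hκ : IsLossRRM P κ)
    (hph : ∀ Y : Ω → ℝ, MemX P Y → ∀ t : ℝ, 0 < t →
      Real.log (κ (fun ω => Real.exp (-(t * Y ω)))) =
        t * Real.log (κ (fun ω => Real.exp (-(Y ω))))) :
    (∀ L L' : Ω → ℝ, MemE P L → MemE P L' →
        SSD P (fun ω => -L ω) (fun ω => -L' ω) → κ L' ≤ κ L) ↔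
      (∀ L : Ω → ℝ, MemE P L → κ L = sInf {x : ℝ | ∀ᵐ ω ∂P, L ω ≤ x}) := by
  simp only [sInf_ae_le_eq_essSup]
  constructor
  · rintro (hcons : LossSSDConsistent P κ) L hL
    obtain ⟨Y, hY, hLY⟩ := hL
    rw [hcons.apply_congr ⟨Y, hY, hLY⟩ hY.memE_exp hLY, essSup_congr_ae hLY]
    exact le_antisymm (hκ.apply_le_essSup (RhoPosHomogeneous.apply_const hph hκ) hY.memC_exp)
      (hcons.essSup_exp_le hκ hph hY)
  · intro hval L L' hL hL' hssd
    rw [hval L hL, hval L' hL']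
    exact hL.essSup_le_of_ssd hL' hssd

/-- Let `κ` be a loss-based return risk measure whose
associated risk measure `ρ_κ(Y) = log (κ (e^{-Y}))` is positively homogeneous.
Then `κ` is SSD-consistent on `𝓔` in the loss-based sense iff
`κ(L) = M(L) = inf {x : L ≤ x a.s.} = ess sup L` for all `L ∈ 𝓔`. -/
theorem statement15 (P : Measure Ω) [IsProbabilityMeasure P] (hP : Atomless P)
    (κ : (Ω → ℝ) → ℝ) (hκ : IsLossRRM P κ)
    (hph : ∀ Y : Ω → ℝ, MemX P Y → ∀ t : ℝ, 0 < t →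
      Real.log (κ (fun ω => Real.exp (-(t * Y ω)))) =
        t * Real.log (κ (fun ω => Real.exp (-(Y ω))))) :
    (∀ L L' : Ω → ℝ, MemE P L → MemE P L' →
        SSD P (fun ω => -L ω) (fun ω => -L' ω) → κ L' ≤ κ L) ↔
      (∀ L : Ω → ℝ, MemE P L → κ L = sInf {x : ℝ | ∀ᵐ ω ∂P, L ω ≤ x}) :=
  statement15_general P κ hκ hph

end Paper
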